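/- arXiv:2311.13923 — 4 statements merged into one kernel-verified Lean document; each statement's English description precedes it below -/
import Mathlib

section
/- Suppose n_A ≥ 1 and (λ10 + λ01 − λ11)·p_0 ≥ λ10 − λ11 + λ11·max_{1≤i≤n_A} p_i. Then for every i ∈ {1,…,n_A}, λ01·p_0 + λ11·(1 − p_i − p_0) ≥ λ10·(1 − p_0); that is, the BRL cost of declaring record j a non-link is no larger than the BRL cost of declaring record j linked to any record i of file A, so the BRL estimator declares record j a non-link. -/
-- The link cost minus the non-link cost is `(λ10 + λ01 - λ11) p0 - λ10 + λ11 - λ11 q`,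
-- which the hypothesis bounds below by `λ11 (m - q) ≥ 0`.
theorem link_cost_ge_nonlink_cost_of_le_bound {lam10 lam01 lam11 p0 q m : ℝ}
    (hlam11 : 0 ≤ lam11) (hq : q ≤ m)
    (hcond : (lam10 + lam01 - lam11) * p0 ≥ lam10 - lam11 + lam11 * m) :
    lam01 * p0 + lam11 * (1 - q - p0) ≥ lam10 * (1 - p0) := by
  linarith [mul_le_mul_of_nonneg_left hq hlam11]

theorem brl_nonmatch_sufficient_condition_general
    {nA : ℕ} (hnA : 1 ≤ nA)
    (lam10 lam01 lam11 : ℝ)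
    (h11 : 0 < lam11)
    (p0 : ℝ) (p : Fin nA → ℝ)
    (hcond : (lam10 + lam01 - lam11) * p0 ≥
      lam10 - lam11 +
        lam11 * Finset.univ.sup'
          (Finset.univ_nonempty_iff.mpr (Fin.pos_iff_nonempty.mp hnA)) p) :
    ∀ i : Fin nA,
      lam01 * p0 + lam11 * (1 - p i - p0) ≥ lam10 * (1 - p0) :=
  fun i => link_cost_ge_nonlink_cost_of_le_bound h11.le
    (Finset.le_sup' p (Finset.mem_univ i)) hcond

/-- Sufficient condition for a non-match, Proposition 1.
For a fixed record `j` of file `B`, `p i` is the posterior probability that record `j`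
matches record `i` of file `A`, and `p0` is the posterior probability that it matches
no record of `A`.  If `(λ10 + λ01 − λ11)·p0 ≥ λ10 − λ11 + λ11·max_i p i`, then for every
`i`, the BRL cost of a non-link, `λ10·(1 − p0)`, is no larger than the BRL cost
`λ01·p0 + λ11·(1 − p i − p0)` of linking record `j` to record `i`. -/
theorem brl_nonmatch_sufficient_condition
    {nA : ℕ} (hnA : 1 ≤ nA)
    (lam10 lam01 lam11 : ℝ)
    (h10 : 0 < lam10) (h01 : 0 < lam01) (h11 : 0 < lam11)
    (p0 : ℝ) (p : Fin nA → ℝ)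
    (hp0 : 0 ≤ p0) (hp : ∀ i, 0 ≤ p i)
    (hsum : p0 + ∑ i, p i = 1)
    (hcond : (lam10 + lam01 - lam11) * p0 ≥
      lam10 - lam11 +
        lam11 * Finset.univ.sup'
          (Finset.univ_nonempty_iff.mpr (Fin.pos_iff_nonempty.mp hnA)) p) :
    ∀ i : Fin nA,
      lam01 * p0 + lam11 * (1 - p i - p0) ≥ lam10 * (1 - p0) :=
  brl_nonmatch_sufficient_condition_general hnA lam10 lam01 lam11 h11 p0 p hcond
end

section
/- Consider assignments Ẑ = (Ẑ_1, …, Ẑ_{n_B}) where each Ẑ_j ∈ {1,…,n_A} ∪ {n_A + j} and no two records of B are assigned to the same record of A (if Ẑ_j = Ẑ_{j'} ≤ n_A then j = j'), with total cost Σ_{j=1}^{n_B} cost_j(Ẑ_j), where cost_j(n_A + j) = λ10·(1 − p_{0,j}) and cost_j(i) = λ01·p_{0,j} + λ11·(1 − p_{i,j} − p_{0,j}) for i ≤ n_A. If n_A ≥ 1 and for some fixed record j₀ it holds that (λ10 + λ01 − λ11)·p_{0,j₀} ≥ λ10 − λ11 + λ11·max_{1≤i≤n_A} p_{i,j₀},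 then there exists an assignment Ẑ minimizing the total cost that satisfies Ẑ_{j₀} = n_A + j₀, i.e., record j₀ is declared a non-link in some cost-minimizing bipartite assignment. -/
/-!
Lowering one coordinate of an assignment to a cheapest value lowers the total cost of a sum of
per-record costs, and unlinking a record keeps the assignment a matching. Under the hypothesis on
`j₀`, declaring `j₀` a non-link is its cheapest option, so unlinking `j₀` in any optimal matching
yields an optimal matching in which `j₀` is a non-link.
-/

/-- BRL cost for record `j` of file `B`: `brlCost λ10 λ01 λ11 p0 pm none` is the cost of
declaring record `j` a non-link, and `brlCost λ10 λ01 λ11 p0 pm (some i)` is the cost of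
declaring it linked to record `i` of file `A`.  Here `p0` is the posterior probability of
no link and `pm i` the posterior probability of a link to record `i`. -/
noncomputable def brlCost {nA : ℕ} (lam10 lam01 lam11 p0 : ℝ)
    (pm : Fin nA → ℝ) : Option (Fin nA) → ℝ
  | none => lam10 * (1 - p0)
  | some i => lam01 * p0 + lam11 * (1 - pm i - p0)

open Function

section SumMinimizer

variable {ι β M : Type*} [Fintype ι] [DecidableEq ι] [AddCommMonoid M]

theorem sum_comp_update_le [PartialOrder M] [IsOrderedAddMonoid M]
    (c : ι → β → M) (Z : ι → β) {j₀ : ι} {b₀ : β} (h : c j₀ b₀ ≤ c j₀ (Z j₀)) :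
    ∑ j, c j (update Z j₀ b₀ j) ≤ ∑ j, c j (Z j) := by
  refine Finset.sum_le_sum fun j _ => ?_
  rcases eq_or_ne j j₀ with rfl | hj
  · simpa using h
  · rw [update_of_ne hj]

theorem exists_sum_minimizer_apply_eq [LinearOrder M] [IsOrderedAddMonoid M] [Finite β]
    (c : ι → β → M) {S : Set (ι → β)} (hS : S.Nonempty)
    {j₀ : ι} {b₀ : β} (hupdate : ∀ Z ∈ S, update Z j₀ b₀ ∈ S) (hc : ∀ b, c j₀ b₀ ≤ c j₀ b) :
    ∃ Z ∈ S, (∀ Z' ∈ S, ∑ j, c j (Z j) ≤ ∑ j, c j (Z' j)) ∧ Z j₀ = b₀ := by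
  obtain ⟨Z, hZ, hmin⟩ := S.exists_min_image (fun Z => ∑ j, c j (Z j)) S.toFinite hS
  refine ⟨update Z j₀ b₀, hupdate Z hZ, fun Z' hZ' => ?_, update_self _ _ _⟩
  exact (sum_comp_update_le c Z (hc _)).trans (hmin Z' hZ')

end SumMinimizer

def IsPartialMatching {ι α : Type*} (Z : ι → Option α) : Prop :=
  ∀ j j' i, Z j = some i → Z j' = some i → j = j'

namespace IsPartialMatching

variable {ι α : Type*}

theorem const_none : IsPartialMatching (fun _ : ι => (none : Option α)) := by
  intro j j' i hj
  cases hj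

theorem update_none [DecidableEq ι] {Z : ι → Option α} (hZ : IsPartialMatching Z) (j₀ : ι) :
    IsPartialMatching (update Z j₀ none) := by
  intro j j' i hj hj'
  rcases eq_or_ne j j₀ with rfl | hne
  · simp at hj
  rcases eq_or_ne j' j₀ with rfl | hne'
  · simp at hj'
  rw [update_of_ne hne] at hj
  rw [update_of_ne hne'] at hj'
  exact hZ j j' i hj hj'

end IsPartialMatching

theorem brlCost_none_le_some {nA : ℕ} {lam10 lam01 lam11 p0 m : ℝ} {pm : Fin nA → ℝ}
    (h11 : 0 ≤ lam11) (hcond : lam10 - lam11 + lam11 * m ≤ (lam10 + lam01 - lam11) * p0)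
    {i : Fin nA} (hm : pm i ≤ m) :
    brlCost lam10 lam01 lam11 p0 pm none ≤ brlCost lam10 lam01 lam11 p0 pm (some i) := by
  simp only [brlCost]
  nlinarith [mul_le_mul_of_nonneg_left hm h11]

theorem brl_nonmatch_in_some_optimal_assignment_general
    {nA nB : ℕ} (hnA : 1 ≤ nA)
    (lam10 lam01 lam11 : ℝ)
    (h11 : 0 < lam11)
    (p0 : Fin nB → ℝ) (pm : Fin nA → Fin nB → ℝ)
    (j0 : Fin nB)
    (hcond : (lam10 + lam01 - lam11) * p0 j0 ≥
      lam10 - lam11 +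
        lam11 * Finset.univ.sup'
          (Finset.univ_nonempty_iff.mpr (Fin.pos_iff_nonempty.mp hnA))
          (fun i => pm i j0)) :
    ∃ Z : Fin nB → Option (Fin nA),
      (∀ j j' : Fin nB, ∀ i : Fin nA, Z j = some i → Z j' = some i → j = j') ∧
      (∀ Z' : Fin nB → Option (Fin nA),
        (∀ j j' : Fin nB, ∀ i : Fin nA, Z' j = some i → Z' j' = some i → j = j') →
        ∑ j, brlCost lam10 lam01 lam11 (p0 j) (fun i => pm i j) (Z j) ≤
          ∑ j, brlCost lam10 lam01 lam11 (p0 j) (fun i => pm i j) (Z' j)) ∧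
      Z j0 = none := by
  have hcheapest : ∀ b, brlCost lam10 lam01 lam11 (p0 j0) (fun i => pm i j0) none ≤
      brlCost lam10 lam01 lam11 (p0 j0) (fun i => pm i j0) b
    | none => le_rfl
    | some i =>
      brlCost_none_le_some h11.le hcond (Finset.le_sup' (fun i => pm i j0) (Finset.mem_univ i))
  obtain ⟨Z, hZ, hmin, hZ0⟩ := exists_sum_minimizer_apply_eq
    (fun j => brlCost lam10 lam01 lam11 (p0 j) (fun i => pm i j))
    (S := {Z | IsPartialMatching Z}) ⟨_, IsPartialMatching.const_none⟩
    (fun Z hZ => IsPartialMatching.update_none hZ j0) hcheapest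
  exact ⟨Z, hZ, hmin, hZ0⟩

/-- Consider bipartite assignments `Z : Fin nB → Option (Fin nA)` (record
`j` of `B` is assigned to record `Z j` of `A`, or to no record when `Z j = none`), where
no two records of `B` are assigned to the same record of `A`, with total cost
`∑ j, brlCost λ10 λ01 λ11 (p0 j) (pm · j) (Z j)`.  If `nA ≥ 1` and for some record `j₀`
we have `(λ10 + λ01 − λ11)·p0 j₀ ≥ λ10 − λ11 + λ11·max_i pm i j₀`, then there exists a
total-cost-minimizing assignment that declares `j₀` a non-link. -/
theorem brl_nonmatch_in_some_optimal_assignment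
    {nA nB : ℕ} (hnA : 1 ≤ nA)
    (lam10 lam01 lam11 : ℝ)
    (h10 : 0 < lam10) (h01 : 0 < lam01) (h11 : 0 < lam11)
    (p0 : Fin nB → ℝ) (pm : Fin nA → Fin nB → ℝ)
    (hp0 : ∀ j, 0 ≤ p0 j) (hpm : ∀ i j, 0 ≤ pm i j)
    (hsum : ∀ j, p0 j + ∑ i, pm i j = 1)
    (j0 : Fin nB)
    (hcond : (lam10 + lam01 - lam11) * p0 j0 ≥
      lam10 - lam11 +
        lam11 * Finset.univ.sup'
          (Finset.univ_nonempty_iff.mpr (Fin.pos_iff_nonempty.mp hnA))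
          (fun i => pm i j0)) :
    ∃ Z : Fin nB → Option (Fin nA),
      (∀ j j' : Fin nB, ∀ i : Fin nA, Z j = some i → Z j' = some i → j = j') ∧
      (∀ Z' : Fin nB → Option (Fin nA),
        (∀ j j' : Fin nB, ∀ i : Fin nA, Z' j = some i → Z' j' = some i → j = j') →
        ∑ j, brlCost lam10 lam01 lam11 (p0 j) (fun i => pm i j) (Z j) ≤
          ∑ j, brlCost lam10 lam01 lam11 (p0 j) (fun i => pm i j) (Z' j)) ∧
      Z j0 = none :=
  brl_nonmatch_in_some_optimal_assignment_general hnA lam10 lam01 lam11 h11 p0 pm j0 hcond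
end

section
/- Let Ĉ = [ĉ_{i,j}] be an n_A × n_B matrix with entries in {0,1} satisfying Σ_{i,j} ĉ_{i,j} = k. Then (1/L)·Σ_{s=1}^{L} F_β(Ĉ, C^{(s)}) = Σ_{i,j} ĉ_{i,j}·Δ^{(k)}_{i,j}; that is, over matrices with exactly k links, the Monte Carlo estimate of the expected F-score is a linear function of the entries of Ĉ with coefficients Δ^{(k)}_{i,j}. -/
/-!
With exactly `k` links in `Ĉ`, the denominator `β² ∑ c + ∑ ĉ` of each `F_β(Ĉ, C⁽ˢ⁾)` no longer
depends on `Ĉ`, so every F-score is linear in the entries of `Ĉ`; averaging over the samples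
preserves linearity, and the coefficients average to `Δ⁽ᵏ⁾`.
-/

open Finset

section FScore

variable {ι : Type*} [Fintype ι]

/-- `F_β(Ĉ, C)`, with the cells `(i, j)` of the matrices indexed by `ι`. -/
noncomputable def fScore (β : ℝ) (Chat C : ι → ℝ) : ℝ :=
  (1 + β ^ 2) * (∑ x, Chat x * C x) / (β ^ 2 * ∑ x, C x + ∑ x, Chat x)

/-- `Δ⁽ᵏ⁾` is the average over the samples of `fScoreWeight β k C⁽ˢ⁾`. -/
noncomputable def fScoreWeight (β k : ℝ) (C : ι → ℝ) (x : ι) : ℝ :=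
  (1 + β ^ 2) * C x / (β ^ 2 * ∑ y, C y + k)

theorem fScore_eq_sum_mul_fScoreWeight (β : ℝ) {k : ℝ} {Chat : ι → ℝ} (C : ι → ℝ)
    (hk : ∑ x, Chat x = k) :
    fScore β Chat C = ∑ x, Chat x * fScoreWeight β k C x := by
  rw [fScore, hk, mul_sum, sum_div]
  exact sum_congr rfl fun x _ => by rw [fScoreWeight]; ring

theorem mul_sum_sum_mul_comm {σ : Type*} [Fintype σ] (a : ℝ) (w : ι → ℝ) (g : σ → ι → ℝ) :
    a * ∑ s, ∑ x, w x * g s x = ∑ x, w x * (a * ∑ s, g s x) := by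
  simp only [mul_sum]
  rw [sum_comm]
  exact sum_congr rfl fun x _ => sum_congr rfl fun s _ => by ring

end FScore

theorem monte_carlo_expected_fscore_linear_general
    {nA nB L : ℕ} (k : ℕ)
    (β : ℝ)
    (Chat : Fin nA → Fin nB → ℝ)
    (C : Fin L → Fin nA → Fin nB → ℝ)
    (hsum : ∑ i, ∑ j, Chat i j = (k : ℝ)) :
    (1 / (L : ℝ)) *
        ∑ s, ((1 + β ^ 2) * (∑ i, ∑ j, Chat i j * C s i j)) /
          (β ^ 2 * (∑ i, ∑ j, C s i j) + ∑ i, ∑ j, Chat i j) =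
      ∑ i, ∑ j, Chat i j *
        ((1 / (L : ℝ)) *
          ∑ s, (1 + β ^ 2) * C s i j /
            (β ^ 2 * (∑ i', ∑ j', C s i' j') + (k : ℝ))) := by
  simp only [← Fintype.sum_prod_type'] at hsum ⊢
  have hF (s : Fin L) := fScore_eq_sum_mul_fScoreWeight β (fun x : Fin nA × Fin nB => C s x.1 x.2) hsum
  simp only [fScore, fScoreWeight] at hF
  simp only [hF]
  exact mul_sum_sum_mul_comm _ (fun x : Fin nA × Fin nB => Chat x.1 x.2) _

/-- Let `C⁽¹⁾, …, C⁽ᴸ⁾` be 0/1 posterior samples of the linkage structure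
and let `Ĉ` be a 0/1 matrix with exactly `k` links, `∑_{i,j} ĉ_{i,j} = k`.  Then the
Monte Carlo estimate `(1/L)·∑_s F_β(Ĉ, C⁽ˢ⁾)` of the expected F-score equals the linear
function `∑_{i,j} ĉ_{i,j}·Δ⁽ᵏ⁾_{i,j}` of the entries of `Ĉ`, where
`Δ⁽ᵏ⁾_{i,j} = (1/L)·∑_s (1+β²)·c⁽ˢ⁾_{i,j} / (β²·∑_{i',j'} c⁽ˢ⁾_{i',j'} + k)`. -/
theorem monte_carlo_expected_fscore_linear
    {nA nB L : ℕ} (hL : 0 < L) (k : ℕ) (hk : 1 ≤ k)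
    (β : ℝ) (hβ : 0 < β)
    (Chat : Fin nA → Fin nB → ℝ)
    (hChat : ∀ i j, Chat i j = 0 ∨ Chat i j = 1)
    (C : Fin L → Fin nA → Fin nB → ℝ)
    (hC : ∀ s i j, C s i j = 0 ∨ C s i j = 1)
    (hsum : ∑ i, ∑ j, Chat i j = (k : ℝ)) :
    (1 / (L : ℝ)) *
        ∑ s, ((1 + β ^ 2) * (∑ i, ∑ j, Chat i j * C s i j)) /
          (β ^ 2 * (∑ i, ∑ j, C s i j) + ∑ i, ∑ j, Chat i j) =
      ∑ i, ∑ j, Chat i j *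
        ((1 / (L : ℝ)) *
          ∑ s, (1 + β ^ 2) * C s i j /
            (β ^ 2 * (∑ i', ∑ j', C s i' j') + (k : ℝ))) :=
  monte_carlo_expected_fscore_linear_general k β Chat C hsum
end

section
/- Suppose M > k·max_{i,j} Δ(i,j). Then every feasible assignment f maximizing the total score Σ_{j=1}^{n_B} s(f(j), j) uses every dummy row (each of the n_B − k dummy rows equals f(j) for some j); equivalently, every maximizer assigns exactly n_B − k records of B to dummy rows and exactly k records of B to rows i ≤ n_A. -/
/-! If a dummy row `d` is unused, composing `f` with the transposition of `f j` and `d` moves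
column `j` onto `d` and changes the score by `M - s (f j) j`, which is positive unless `f j` is
itself a dummy row. So a maximizer leaving `d` free sends all `n_B` columns injectively into the
other `n_B - k - 1` dummy rows, which is impossible. Hence the dummy rows are hit, bijectively, by
exactly `n_B - k` columns, and the remaining `k` columns land on genuine rows. -/

/-- Entry of the augmented score matrix: `Δ(i,j)` for the genuine rows `i < nA` and the
large value `M` for the `nB − k` dummy rows `nA ≤ i < nA + nB − k`. -/
noncomputable def augScore {nA nB k : ℕ} (Δ : Fin nA → Fin nB → ℝ) (M : ℝ)
    (i : Fin (nA + nB - k)) (j : Fin nB) : ℝ :=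
  if h : (i : ℕ) < nA then Δ ⟨(i : ℕ), h⟩ j else M

open Finset Function

section Assignment

variable {ι α : Type*} [Fintype ι] {s : α → ι → ℝ} {f : ι → α}

theorem sum_swap_comp_of_notMem_range [DecidableEq α] (hf : Injective f) {d : α}
    (hd : d ∉ Set.range f) (j₀ : ι) :
    ∑ j, s (Equiv.swap (f j₀) d (f j)) j = ∑ j, s (f j) j - s (f j₀) j₀ + s d j₀ := by
  classical
  have hrest : ∀ j ∈ univ.erase j₀, s (Equiv.swap (f j₀) d (f j)) j = s (f j) j :=
    fun j hj ↦ by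
      rw [Equiv.swap_apply_of_ne_of_ne (hf.ne (ne_of_mem_erase hj)) fun h ↦ hd ⟨j, h⟩]
  rw [← add_sum_erase _ _ (mem_univ j₀), ← add_sum_erase _ _ (mem_univ j₀),
    sum_congr rfl hrest, Equiv.swap_apply_left]
  ring

theorem le_of_notMem_range_of_forall_sum_le (hf : Injective f)
    (hmax : ∀ g : ι → α, Injective g → ∑ j, s (g j) j ≤ ∑ j, s (f j) j)
    {d : α} (hd : d ∉ Set.range f) (j₀ : ι) : s d j₀ ≤ s (f j₀) j₀ := by
  classical
  have hswap := hmax (Equiv.swap (f j₀) d ∘ f) ((Equiv.injective _).comp hf)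
  simp only [comp_apply, sum_swap_comp_of_notMem_range hf hd] at hswap
  linarith

variable [Fintype α] {p : α → Prop} [DecidablePred p]

theorem mem_range_of_forall_sum_le (hf : Injective f)
    (hmax : ∀ g : ι → α, Injective g → ∑ j, s (g j) j ≤ ∑ j, s (f j) j)
    (hcard : #{a | p a} ≤ Fintype.card ι) (hs : ∀ a b j, p a → ¬ p b → s b j < s a j)
    {d : α} (hd : p d) : d ∈ Set.range f := by
  classical
  by_contra hdf
  have himage : univ.image f ⊆ ({a | p a} : Finset α).erase d := fun a ha ↦ by
    obtain ⟨j, -, rfl⟩ := mem_image.mp ha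
    refine mem_erase.mpr ⟨fun h ↦ hdf ⟨j, h⟩, mem_filter.mpr ⟨mem_univ _, ?_⟩⟩
    by_contra hj
    exact (hs d (f j) j hd hj).not_ge (le_of_notMem_range_of_forall_sum_le hf hmax hdf j)
  have hle := card_le_card himage
  rw [card_image_of_injective _ hf, card_univ, card_erase_of_mem (by simpa using hd)] at hle
  have hpos : 0 < #{a | p a} := card_pos.mpr ⟨d, by simpa using hd⟩
  omega

theorem card_filter_comp_of_injective (hf : Injective f) (hp : ∀ a, p a → a ∈ Set.range f) :
    #{j | p (f j)} = #{a | p a} :=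
  card_nbij f (fun j hj ↦ by simpa using hj) hf.injOn fun a ha ↦ by
    obtain ⟨j, rfl⟩ := hp a (by simpa using ha)
    exact ⟨j, by simpa using ha, rfl⟩

end Assignment

theorem Fin.card_filter_le_val {n m : ℕ} : #{i : Fin n | m ≤ (i : ℕ)} = n - m := by
  have h := card_filter_add_card_filter_not (s := univ) fun i : Fin n ↦ (i : ℕ) < m
  simp only [not_lt, Fin.card_filter_val_lt, card_univ, Fintype.card_fin] at h
  omega

section AugScore

variable {nA nB k : ℕ} {Δ : Fin nA → Fin nB → ℝ} {M : ℝ}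

theorem augScore_of_lt {i : Fin (nA + nB - k)} (hi : (i : ℕ) < nA) (j : Fin nB) :
    augScore Δ M i j = Δ ⟨i, hi⟩ j :=
  dif_pos hi

theorem augScore_of_le {i : Fin (nA + nB - k)} (hi : nA ≤ (i : ℕ)) (j : Fin nB) :
    augScore Δ M i j = M :=
  dif_neg hi.not_gt

end AugScore

theorem lsap_maximizer_uses_all_dummy_rows_general
    {nA nB k : ℕ} (hk1 : 1 ≤ k) (hkB : k ≤ nB)
    (Δ : Fin nA → Fin nB → ℝ) (hΔ : ∀ i j, 0 ≤ Δ i j)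
    (M : ℝ) (hM : ∀ i j, (k : ℝ) * Δ i j < M) :
    ∀ f : Fin nB → Fin (nA + nB - k), Function.Injective f →
      (∀ g : Fin nB → Fin (nA + nB - k), Function.Injective g →
        ∑ j, augScore Δ M (g j) j ≤ ∑ j, augScore Δ M (f j) j) →
      (∀ i : Fin (nA + nB - k), nA ≤ (i : ℕ) → ∃ j, f j = i) ∧
      (Finset.univ.filter (fun j : Fin nB => nA ≤ ((f j : ℕ)))).card = nB - k ∧
      (Finset.univ.filter (fun j : Fin nB => ((f j : ℕ)) < nA)).card = k := by
  intro f hf hmax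
  have hdummy : #{i : Fin (nA + nB - k) | nA ≤ (i : ℕ)} = nB - k := by
    rw [Fin.card_filter_le_val]; omega
  have hs : ∀ (a b : Fin (nA + nB - k)) j, nA ≤ (a : ℕ) → ¬ nA ≤ (b : ℕ) →
      augScore Δ M b j < augScore Δ M a j := fun a b j ha hb ↦ by
    rw [augScore_of_le ha, augScore_of_lt (not_le.mp hb)]
    exact (le_mul_of_one_le_left (hΔ _ _) (by exact_mod_cast hk1)).trans_lt (hM _ _)
  have hrange (i : Fin (nA + nB - k)) (hi : nA ≤ (i : ℕ)) : i ∈ Set.range f :=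
    mem_range_of_forall_sum_le hf hmax (by simp only [hdummy, Fintype.card_fin]; omega) hs hi
  have hused : #{j | nA ≤ (f j : ℕ)} = nB - k := by
    rw [card_filter_comp_of_injective hf hrange, hdummy]
  have hsplit := card_filter_add_card_filter_not (s := univ) fun j : Fin nB ↦ nA ≤ (f j : ℕ)
  simp only [not_le, card_univ, Fintype.card_fin] at hsplit
  exact ⟨hrange, hused, by omega⟩

/-- If `M > k·max_{i,j} Δ(i,j)` (here stated as `M > k·Δ(i,j)` for all
`i, j`, equivalent since `1 ≤ k ≤ min(nA, nB)` makes the index set nonempty), then every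
injective assignment `f : Fin nB → Fin (nA + nB − k)` maximizing the total augmented
score uses every dummy row; equivalently, it assigns exactly `nB − k` records of `B` to
dummy rows and exactly `k` records of `B` to genuine rows `i < nA`. -/
theorem lsap_maximizer_uses_all_dummy_rows
    {nA nB k : ℕ} (hk1 : 1 ≤ k) (hkA : k ≤ nA) (hkB : k ≤ nB)
    (Δ : Fin nA → Fin nB → ℝ) (hΔ : ∀ i j, 0 ≤ Δ i j)
    (M : ℝ) (hM : ∀ i j, (k : ℝ) * Δ i j < M) :
    ∀ f : Fin nB → Fin (nA + nB - k), Function.Injective f →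
      (∀ g : Fin nB → Fin (nA + nB - k), Function.Injective g →
        ∑ j, augScore Δ M (g j) j ≤ ∑ j, augScore Δ M (f j) j) →
      (∀ i : Fin (nA + nB - k), nA ≤ (i : ℕ) → ∃ j, f j = i) ∧
      (Finset.univ.filter (fun j : Fin nB => nA ≤ ((f j : ℕ)))).card = nB - k ∧
      (Finset.univ.filter (fun j : Fin nB => ((f j : ℕ)) < nA)).card = k :=
  lsap_maximizer_uses_all_dummy_rows_general hk1 hkB Δ hΔ M hM
end
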